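/- For every first-order sentence φ in the language of graphs of quantifier depth at most 3, the graph 2·G^1_{4,3} (two disjoint copies of the almost multipartite graph G^1_{4,3}) satisfies φ if and only if the graph 2·G^1_{3,3} satisfies φ. -/

import Mathlib

open FirstOrder

/-- Quantifier depth of a first-order (bounded) formula: atomic formulas have
depth 0, binary connectives take the max, and a quantifier adds 1. -/
def FirstOrder.Language.BoundedFormula.qdepth {L : Language} {α : Type*} :
    {n : ℕ} → L.BoundedFormula α n → ℕ
  | _, .falsum => 0
  | _, .equal _ _ => 0
  | _, .rel _ _ => 0
  | _, .imp f g => max f.qdepth g.qdepth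
  | _, .all f => f.qdepth + 1

/-- Disjoint union of `m` copies of a graph `A`. -/
def manyCopies {α : Type*} (m : ℕ) (A : SimpleGraph α) : SimpleGraph (Fin m × α) where
  Adj p q := p.1 = q.1 ∧ A.Adj p.2 q.2
  symm := by constructor; intro p q h; exact ⟨h.1.symm, h.2.symm⟩
  loopless := by constructor; intro p h; exact A.loopless.irrefl _ h.2

/-- The almost multipartite graph `G^m_{ℓ,k}`, on triples `(i, j, h)` where `i` is the
class, `j` the dole and `h` the part: two vertices are adjacent iff they are in the same
part with different classes and doles, or have the same class and different parts. -/
def almostMultipartite (ℓ k m : ℕ) : SimpleGraph (Fin ℓ × Fin k × Fin m) where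
  Adj p q := (p.2.2 = q.2.2 ∧ p.1 ≠ q.1 ∧ p.2.1 ≠ q.2.1) ∨ (p.1 = q.1 ∧ p.2.2 ≠ q.2.2)
  symm := by
    constructor
    rintro p q (⟨h1, h2, h3⟩ | ⟨h1, h2⟩)
    · exact Or.inl ⟨h1.symm, h2.symm, h3.symm⟩
    · exact Or.inr ⟨h1.symm, h2.symm⟩
  loopless := by constructor; rintro p (⟨_, h, _⟩ | ⟨_, h⟩) <;> exact h rfl

/-!
Both graphs are `2A` for a graph `A` with the 2-extension property: every set of at most two
vertices can be extended by a new vertex adjacent to any prescribed part of it. Indeed `G¹_{ℓ,k}`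
is the graph on `[ℓ] × [k]` in which two vertices are adjacent iff they differ in both
coordinates, and it has this property as soon as `ℓ, k ≥ 3`. Duplicator then wins the 3-round
Ehrenfeucht–Fraïssé game on `2A` versus `2B`: a new pebble is answered in the copy dictated by
how the earlier pebbles are distributed over the copies (with only two copies this pattern
determines it), and inside that copy by the extension property applied to the at most two
pebbles already there.
-/

open FirstOrder Language

theorem FirstOrder.Language.graph.exists_term_eq_var {α : Type*} (t : Language.graph.Term α) :
    ∃ a, t = Term.var a := by
  cases t with
  | var a => exact ⟨a, rfl⟩
  | func f _ => exact isEmptyElim f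

section Corresponds

variable {V W : Type*} {n : ℕ}

def Corresponds {ι : Type*} (r : V → V → Prop) (s : W → W → Prop) (xs : ι → V)
    (ys : ι → W) : Prop :=
  ∀ i j, r (xs i) (xs j) ↔ s (ys i) (ys j)

variable {r : V → V → Prop} {s : W → W → Prop} {xs : Fin n → V} {ys : Fin n → W}

theorem Corresponds.symm {ι : Type*} {xs : ι → V} {ys : ι → W} (h : Corresponds r s xs ys) :
    Corresponds s r ys xs :=
  fun i j => (h i j).symm

theorem Corresponds.snoc (hr : ∀ x y, r x y → r y x) (hs : ∀ x y, s x y → s y x)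
    (h : Corresponds r s xs ys) {a : V} {b : W} (hab : ∀ i, r (xs i) a ↔ s (ys i) b)
    (hrefl : r a a ↔ s b b) :
    Corresponds r s (Fin.snoc (α := fun _ => V) xs a) (Fin.snoc (α := fun _ => W) ys b) := by
  have hba : ∀ i, r a (xs i) ↔ s b (ys i) := fun i =>
    ⟨fun h' => hs _ _ ((hab i).1 (hr _ _ h')), fun h' => hr _ _ ((hab i).2 (hs _ _ h'))⟩
  intro i j
  induction i using Fin.lastCases <;> induction j using Fin.lastCases <;>
    simp only [Fin.snoc_last, Fin.snoc_castSucc] <;> apply_assumption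

theorem Corresponds.exists_eq_iff {ι : Type*} {f g : ι → Fin 2} (h : Corresponds Eq Eq f g)
    (c₀ : Fin 2) : ∃ c, ∀ i, g i = c ↔ f i = c₀ := by
  rcases isEmpty_or_nonempty ι with hι | ⟨⟨i₀⟩⟩
  · exact ⟨0, isEmptyElim⟩
  have two_classes : ∀ x y c : Fin 2, x = c ↔ (x = y ↔ y = c) := by decide
  obtain ⟨c, hc⟩ : ∃ c, g i₀ = c ↔ f i₀ = c₀ :=
    (by decide : ∀ y x z : Fin 2, ∃ c, y = c ↔ x = z) _ _ _
  exact ⟨c, fun i => by rw [two_classes (g i) (g i₀), two_classes (f i) (f i₀), h i i₀, hc]⟩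

end Corresponds

namespace SimpleGraph

variable {V W : Type*} (G : SimpleGraph V) (H : SimpleGraph W)

def IsPartialIso {n : ℕ} (xs : Fin n → V) (ys : Fin n → W) : Prop :=
  Corresponds Eq Eq xs ys ∧ Corresponds G.Adj H.Adj xs ys

def DuplicatorWins : ℕ → {n : ℕ} → (Fin n → V) → (Fin n → W) → Prop
  | 0, _, xs, ys => G.IsPartialIso H xs ys
  | r + 1, _, xs, ys => G.IsPartialIso H xs ys ∧
      (∀ a, ∃ b, DuplicatorWins r (Fin.snoc xs a) (Fin.snoc ys b)) ∧
      (∀ b, ∃ a, DuplicatorWins r (Fin.snoc xs a) (Fin.snoc ys b))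

variable {G H}

theorem DuplicatorWins.isPartialIso {n : ℕ} {xs : Fin n → V} {ys : Fin n → W} :
    ∀ {r : ℕ}, G.DuplicatorWins H r xs ys → G.IsPartialIso H xs ys
  | 0, h => h
  | _ + 1, h => h.1

theorem realize_iff_of_duplicatorWins {n : ℕ} (φ : Language.graph.BoundedFormula Empty n)
    {r : ℕ} (hφ : φ.qdepth ≤ r) (v : Empty → V) (w : Empty → W) {xs : Fin n → V}
    {ys : Fin n → W} (h : G.DuplicatorWins H r xs ys) :
    (letI := G.structure; φ.Realize v xs) ↔ (letI := H.structure; φ.Realize w ys) := by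
  induction φ generalizing r with
  | falsum => exact Iff.rfl
  | equal t₁ t₂ =>
    obtain ⟨_ | i, rfl⟩ := graph.exists_term_eq_var t₁
    · contradiction
    obtain ⟨_ | j, rfl⟩ := graph.exists_term_eq_var t₂
    · contradiction
    exact h.isPartialIso.1 i j
  | rel R ts =>
    cases R
    obtain ⟨_ | i, hi⟩ := graph.exists_term_eq_var (ts 0)
    · contradiction
    obtain ⟨_ | j, hj⟩ := graph.exists_term_eq_var (ts 1)
    · contradiction
    obtain rfl : ts = ![Term.var (Sum.inr i), Term.var (Sum.inr j)] := by
      ext k; fin_cases k <;> assumption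
    exact h.isPartialIso.2 i j
  | imp f g ihf ihg =>
    exact imp_congr (ihf (le_of_max_le_left hφ) h) (ihg (le_of_max_le_right hφ) h)
  | all f ih =>
    replace hφ : f.qdepth + 1 ≤ r := hφ
    obtain ⟨r, rfl⟩ : ∃ r', r = r' + 1 := ⟨r - 1, by omega⟩
    obtain ⟨-, forth, back⟩ := h
    refine ⟨fun hx b => ?_, fun hy a => ?_⟩
    · obtain ⟨a, ha⟩ := back b
      exact (ih (by omega) ha).1 (hx a)
    · obtain ⟨b, hb⟩ := forth a
      exact (ih (by omega) hb).2 (hy b)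

theorem realize_sentence_iff_of_duplicatorWins (φ : Language.graph.Sentence) {r : ℕ}
    (hφ : φ.qdepth ≤ r) (h : G.DuplicatorWins H r (default : Fin 0 → V) (default : Fin 0 → W)) :
    (letI := G.structure; φ.Realize V) ↔ (letI := H.structure; φ.Realize W) :=
  realize_iff_of_duplicatorWins φ hφ default default h

end SimpleGraph

theorem Finset.exists_forall_mem_eq_or_eq_of_card_le_two {α : Type*} [Nonempty α] {s : Finset α}
    (hs : s.card ≤ 2) : ∃ a b, ∀ x ∈ s, x = a ∨ x = b := by
  classical
  obtain rfl | ⟨a, ha⟩ := s.eq_empty_or_nonempty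
  · obtain ⟨a⟩ := ‹Nonempty α›
    exact ⟨a, a, by simp⟩
  obtain ⟨b, hb⟩ := Finset.card_le_one_iff_subset_singleton.1
    (by rw [Finset.card_erase_of_mem ha]; omega : (s.erase a).card ≤ 1)
  refine ⟨a, b, fun x hx => ?_⟩
  by_cases hxa : x = a
  · simp [hxa]
  · simpa [hxa] using hb (Finset.mem_erase.2 ⟨hxa, hx⟩)

namespace SimpleGraph

variable {α β : Type*} {A : SimpleGraph α} {B : SimpleGraph β} {k : ℕ}

def HasExtensionProperty (A : SimpleGraph α) (k : ℕ) : Prop :=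
  ∀ U : Finset α, U.card ≤ k → ∀ P : α → Prop, ∃ w ∉ U, ∀ u ∈ U, A.Adj u w ↔ P u

theorem hasExtensionProperty_two_of_forall_pair [Nonempty α]
    (h : ∀ u v (P : α → Prop), ∃ w, w ≠ u ∧ w ≠ v ∧ (A.Adj u w ↔ P u) ∧ (A.Adj v w ↔ P v)) :
    A.HasExtensionProperty 2 := by
  intro U hU P
  obtain ⟨u, v, hUuv⟩ := Finset.exists_forall_mem_eq_or_eq_of_card_le_two hU
  obtain ⟨w, hwu, hwv, hu, hv⟩ := h u v P
  refine ⟨w, fun hw => ?_, fun x hx => ?_⟩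
  · rcases hUuv w hw with rfl | rfl <;> contradiction
  · rcases hUuv x hx with rfl | rfl <;> assumption

def IsCopyPartialIso (A : SimpleGraph α) (B : SimpleGraph β) {n : ℕ}
    (xs : Fin n → Fin 2 × α) (ys : Fin n → Fin 2 × β) : Prop :=
  (manyCopies 2 A).IsPartialIso (manyCopies 2 B) xs ys ∧
    Corresponds Eq Eq (Prod.fst ∘ xs) (Prod.fst ∘ ys)

variable {n : ℕ} {xs : Fin n → Fin 2 × α} {ys : Fin n → Fin 2 × β}

theorem IsCopyPartialIso.symm (h : IsCopyPartialIso A B xs ys) : IsCopyPartialIso B A ys xs :=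
  ⟨⟨h.1.1.symm, h.1.2.symm⟩, h.2.symm⟩

theorem IsCopyPartialIso.snoc (h : IsCopyPartialIso A B xs ys) {a : Fin 2 × α} {b : Fin 2 × β}
    (hab : ∀ i, (xs i = a ↔ ys i = b) ∧ ((manyCopies 2 A).Adj (xs i) a ↔
      (manyCopies 2 B).Adj (ys i) b) ∧ ((xs i).1 = a.1 ↔ (ys i).1 = b.1)) :
    IsCopyPartialIso A B (Fin.snoc xs a) (Fin.snoc ys b) := by
  refine ⟨⟨h.1.1.snoc (fun _ _ => Eq.symm) (fun _ _ => Eq.symm) (fun i => (hab i).1) ?_,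
    h.1.2.snoc (fun _ _ => Adj.symm) (fun _ _ => Adj.symm) (fun i => (hab i).2.1) ?_⟩, ?_⟩
  · exact iff_of_true rfl rfl
  · exact iff_of_false (manyCopies 2 A).irrefl (manyCopies 2 B).irrefl
  · rw [Fin.comp_snoc, Fin.comp_snoc]
    exact h.2.snoc (fun _ _ => Eq.symm) (fun _ _ => Eq.symm) (fun i => (hab i).2.2)
      (iff_of_true rfl rfl)

theorem IsCopyPartialIso.exists_snoc (hB : B.HasExtensionProperty k) (hn : n ≤ k)
    (h : IsCopyPartialIso A B xs ys) (a : Fin 2 × α) :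
    ∃ b, IsCopyPartialIso A B (Fin.snoc xs a) (Fin.snoc ys b) := by
  suffices ∃ b, ∀ i, (xs i = a ↔ ys i = b) ∧ ((manyCopies 2 A).Adj (xs i) a ↔
      (manyCopies 2 B).Adj (ys i) b) ∧ ((xs i).1 = a.1 ↔ (ys i).1 = b.1) from
    this.imp fun _ => h.snoc
  by_cases hxa : ∃ i, xs i = a
  · obtain ⟨i₀, rfl⟩ := hxa
    exact ⟨ys i₀, fun i => ⟨h.1.1 i i₀, h.1.2 i i₀, h.2 i i₀⟩⟩
  push Not at hxa
  obtain ⟨c, hc⟩ := h.2.exists_eq_iff a.1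
  classical
  set U := (Finset.univ.filter fun i => (ys i).1 = c).image fun i => (ys i).2
  have hU : U.card ≤ k :=
    Finset.card_image_le.trans ((Finset.card_filter_le _ _).trans (by simpa using hn))
  have mem_U {i} (hi : (ys i).1 = c) : (ys i).2 ∈ U :=
    Finset.mem_image_of_mem _ (Finset.mem_filter.2 ⟨Finset.mem_univ i, hi⟩)
  obtain ⟨w, hwU, hw⟩ := hB U hU fun y => ∃ i, ys i = (c, y) ∧ A.Adj (xs i).2 a.2
  refine ⟨(c, w), fun i => ⟨iff_of_false (hxa i) fun hyi => hwU ?_, ?_, (hc i).symm⟩⟩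
  · simpa [hyi] using mem_U (i := i) (by rw [hyi])
  show (xs i).1 = a.1 ∧ A.Adj (xs i).2 a.2 ↔ (ys i).1 = c ∧ B.Adj (ys i).2 w
  rw [show (ys i).1 = c ↔ (xs i).1 = a.1 from hc i]
  refine and_congr_right fun hxi => ?_
  have hyi : (ys i).1 = c := (hc i).2 hxi
  rw [hw _ (mem_U hyi)]
  have hys : ys i = (c, (ys i).2) := Prod.ext hyi rfl
  refine ⟨fun had => ⟨i, hys, had⟩, fun ⟨j, hj, had⟩ => ?_⟩
  rwa [(h.1.1 j i).2 (hj.trans hys.symm)] at had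

theorem IsCopyPartialIso.duplicatorWins (hA : A.HasExtensionProperty k)
    (hB : B.HasExtensionProperty k) :
    ∀ {r n : ℕ} {xs : Fin n → Fin 2 × α} {ys : Fin n → Fin 2 × β}, n + r ≤ k + 1 →
      IsCopyPartialIso A B xs ys → (manyCopies 2 A).DuplicatorWins (manyCopies 2 B) r xs ys
  | 0, _, _, _, _, h => h.1
  | _ + 1, _, _, _, hr, h =>
    ⟨h.1, fun a => (h.exists_snoc hB (by omega) a).imp fun _ hb =>
        hb.duplicatorWins hA hB (by omega),
      fun b => (h.symm.exists_snoc hA (by omega) b).imp fun _ ha =>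
        ha.symm.duplicatorWins hA hB (by omega)⟩

theorem manyCopies_two_realize_iff_of_hasExtensionProperty (hA : A.HasExtensionProperty k)
    (hB : B.HasExtensionProperty k) (φ : Language.graph.Sentence) (hφ : φ.qdepth ≤ k + 1) :
    (letI := (manyCopies 2 A).structure; φ.Realize (Fin 2 × α)) ↔
      (letI := (manyCopies 2 B).structure; φ.Realize (Fin 2 × β)) :=
  realize_sentence_iff_of_duplicatorWins φ hφ <| IsCopyPartialIso.duplicatorWins hA hB
    (Nat.zero_add _).le ⟨⟨finZeroElim, finZeroElim⟩, finZeroElim⟩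

end SimpleGraph

section AlmostMultipartite

variable {ℓ k : ℕ}

theorem almostMultipartite_one_adj {p q : Fin ℓ × Fin k × Fin 1} :
    (almostMultipartite ℓ k 1).Adj p q ↔ p.1 ≠ q.1 ∧ p.2.1 ≠ q.2.1 := by
  simp [almostMultipartite, Subsingleton.elim p.2.2 q.2.2]

theorem fin_one_triple_ext_iff {p q : Fin ℓ × Fin k × Fin 1} :
    p = q ↔ p.1 = q.1 ∧ p.2.1 = q.2.1 := by
  simp [Prod.ext_iff, Subsingleton.elim p.2.2 q.2.2]

theorem almostMultipartite_one_exists_adj_not_adj (hℓ : 3 ≤ ℓ) (hk : 3 ≤ k)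
    {u v : Fin ℓ × Fin k × Fin 1} (huv : u ≠ v) :
    ∃ w, w ≠ v ∧ (almostMultipartite ℓ k 1).Adj u w ∧ ¬(almostMultipartite ℓ k 1).Adj v w := by
  simp only [almostMultipartite_one_adj, ne_eq, fin_one_triple_ext_iff] at huv ⊢
  obtain ⟨i, hi⟩ := Fin.exists_ne_and_ne_of_two_lt u.1 v.1 (by omega)
  obtain ⟨j, hj⟩ := Fin.exists_ne_and_ne_of_two_lt u.2.1 v.2.1 (by omega)
  by_cases h1 : u.1 = v.1
  · exact ⟨(i, v.2.1, 0), by grind⟩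
  · exact ⟨(v.1, j, 0), by grind⟩

theorem almostMultipartite_one_exists_not_adj_not_adj (hℓ : 3 ≤ ℓ) (hk : 3 ≤ k)
    (u v : Fin ℓ × Fin k × Fin 1) :
    ∃ w, w ≠ u ∧ w ≠ v ∧ ¬(almostMultipartite ℓ k 1).Adj u w ∧
      ¬(almostMultipartite ℓ k 1).Adj v w := by
  simp only [almostMultipartite_one_adj, ne_eq, fin_one_triple_ext_iff]
  obtain ⟨i, hi⟩ := Fin.exists_ne_and_ne_of_two_lt u.1 v.1 (by omega)
  obtain ⟨j, hj⟩ := Fin.exists_ne_and_ne_of_two_lt u.2.1 v.2.1 (by omega)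
  by_cases h1 : u.1 = v.1
  · exact ⟨(u.1, j, 0), by grind⟩
  by_cases h2 : u.2.1 = v.2.1
  · exact ⟨(i, u.2.1, 0), by grind⟩
  · exact ⟨(u.1, v.2.1, 0), by grind⟩

theorem almostMultipartite_one_hasExtensionProperty_two (hℓ : 3 ≤ ℓ) (hk : 3 ≤ k) :
    (almostMultipartite ℓ k 1).HasExtensionProperty 2 := by
  have : Nonempty (Fin ℓ × Fin k × Fin 1) := ⟨(⟨0, by omega⟩, ⟨0, by omega⟩, 0)⟩
  refine SimpleGraph.hasExtensionProperty_two_of_forall_pair fun u v P => ?_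
  by_cases hu : P u <;> by_cases hv : P v
  · obtain ⟨i, hi⟩ := Fin.exists_ne_and_ne_of_two_lt u.1 v.1 (by omega)
    obtain ⟨j, hj⟩ := Fin.exists_ne_and_ne_of_two_lt u.2.1 v.2.1 (by omega)
    refine ⟨(i, j, 0), ?_⟩
    simp only [almostMultipartite_one_adj, ne_eq, fin_one_triple_ext_iff]
    grind
  · obtain ⟨w, hwv, hu', hv'⟩ :=
      almostMultipartite_one_exists_adj_not_adj hℓ hk (u := u) (v := v) (by grind)
    exact ⟨w, ((almostMultipartite ℓ k 1).ne_of_adj hu').symm, hwv, by simp [hu, hu'],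
      by simp [hv, hv']⟩
  · obtain ⟨w, hwu, hv', hu'⟩ :=
      almostMultipartite_one_exists_adj_not_adj hℓ hk (u := v) (v := u) (by grind)
    exact ⟨w, hwu, ((almostMultipartite ℓ k 1).ne_of_adj hv').symm, by simp [hu, hu'],
      by simp [hv, hv']⟩
  · obtain ⟨w, hwu, hwv, hu', hv'⟩ := almostMultipartite_one_exists_not_adj_not_adj hℓ hk u v
    exact ⟨w, hwu, hwv, by simp [hu, hu'], by simp [hv, hv']⟩

end AlmostMultipartite

open FirstOrder in
/-- the graphs `2·G¹_{4,3}` and `2·G¹_{3,3}` satisfy exactly the same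
first-order sentences of quantifier depth at most 3. -/
theorem doubled_almost_multipartite_elementary_equiv
    (φ : Language.graph.Sentence) (hφ : φ.qdepth ≤ 3) :
    (letI := (manyCopies 2 (almostMultipartite 4 3 1)).structure
     φ.Realize (Fin 2 × (Fin 4 × Fin 3 × Fin 1))) ↔
    (letI := (manyCopies 2 (almostMultipartite 3 3 1)).structure
     φ.Realize (Fin 2 × (Fin 3 × Fin 3 × Fin 1))) :=
  SimpleGraph.manyCopies_two_realize_iff_of_hasExtensionProperty
    (almostMultipartite_one_hasExtensionProperty_two (by norm_num) le_rfl)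
    (almostMultipartite_one_hasExtensionProperty_two le_rfl le_rfl) φ hφ
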